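/- (Cost bound for the shifted artificial reference, eq. (13).) Suppose g_p is Lipschitz with constant L_{g_p}, V_o is convex with V_o(0) = 0, and the controllability assumption holds with constants b > 0 and σ > 1. Let s ∈ [0,1], β ∈ [0,1], and set ŝ = (1−β)s + β. If x is a state with ‖x − g_p(ŝ)‖ ≤ ε, and (u, x̃, ŝ) is a tuple feasible at x provided by the controllability assumption (so Σ_{l=0}^{N−1} ℓ(x̃_l − g_p(ŝ), u_l − u_{ŝ}) ≤ b‖x − g_p(ŝ)‖^σ), then J_N(u, x̃, ŝ) ≤ 2^{σ−1} b ‖x − g_p(s)‖^σ + 2^{σ−1} b L_{g_p}^σ β^σ |s − 1|^σ + (1−β) V_o(1−s). -/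

import Mathlib

open Filter Topology

noncomputable section

/-- A class-`K` function: continuous on `[0,∞)`, strictly increasing there, vanishing at `0`. -/
def IsClassK (α : ℝ → ℝ) : Prop :=
  ContinuousOn α (Set.Ici 0) ∧ StrictMonoOn α (Set.Ici 0) ∧ α 0 = 0

/-- A class-`K∞` function: class `K` and unbounded. -/
def IsClassKInfty (α : ℝ → ℝ) : Prop :=
  IsClassK α ∧ Filter.Tendsto α Filter.atTop Filter.atTop

/-- The data of the output-tracking MPC problem for motion planning:
dynamics `f`, constraint set `Z`, `No` obstacles `O i`, footprint `B`,
reference path `p`, output map `g`, steady-state path `gp` with steady inputs `us`,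
stage cost `sc` (called `ℓ` in the paper), offset cost `Vo`, and horizon `N`. -/
structure MPC (n m q : ℕ) where
  f : EuclideanSpace ℝ (Fin n) → EuclideanSpace ℝ (Fin m) → EuclideanSpace ℝ (Fin n)
  Z : Set (EuclideanSpace ℝ (Fin n) × EuclideanSpace ℝ (Fin m))
  No : ℕ
  O : ℕ → Set (EuclideanSpace ℝ (Fin 2))
  B : EuclideanSpace ℝ (Fin n) → Set (EuclideanSpace ℝ (Fin 2))
  p : ℝ → EuclideanSpace ℝ (Fin q)
  g : EuclideanSpace ℝ (Fin n) → EuclideanSpace ℝ (Fin q)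
  gp : ℝ → EuclideanSpace ℝ (Fin n)
  us : ℝ → EuclideanSpace ℝ (Fin m)
  sc : EuclideanSpace ℝ (Fin n) → EuclideanSpace ℝ (Fin m) → ℝ
  Vo : ℝ → ℝ
  N : ℕ

namespace MPC

variable {n m q : ℕ} (M : MPC n m q)

/-- A tuple `(u_{0:N}, x_{0:N}, s)` is feasible at state `x` for problem (7):
`x_{0|k} = x`, the dynamics hold along the prediction, the terminal pair is a steady
state whose output lies on the path at `s ∈ [0,1]`, the state/input constraints hold, and
the predicted states `l = 1,…,N` are collision-free. -/
def Feasible (x : EuclideanSpace ℝ (Fin n)) (u : ℕ → EuclideanSpace ℝ (Fin m))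
    (xs : ℕ → EuclideanSpace ℝ (Fin n)) (s : ℝ) : Prop :=
  s ∈ Set.Icc (0 : ℝ) 1 ∧
  xs 0 = x ∧
  (∀ l < M.N, xs (l + 1) = M.f (xs l) (u l)) ∧
  xs M.N = M.f (xs M.N) (u M.N) ∧
  M.g (xs M.N) = M.p s ∧
  (∀ l ≤ M.N, (xs l, u l) ∈ M.Z) ∧
  (∀ l, 1 ≤ l → l ≤ M.N → ∀ i < M.No, M.B (xs l) ∩ M.O i = ∅)

/-- The MPC cost `J_N(u, x, s) = Σ_{l=0}^{N-1} ℓ(x_l − x_N, u_l − u_N) + V_o(1 − s)`. -/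
def Cost (u : ℕ → EuclideanSpace ℝ (Fin m)) (xs : ℕ → EuclideanSpace ℝ (Fin n)) (s : ℝ) : ℝ :=
  (∑ l ∈ Finset.range M.N, M.sc (xs l - xs M.N) (u l - u M.N)) + M.Vo (1 - s)

/-- `(u, xs, s)` is an optimal feasible tuple at `x`; its cost is the optimal value `V_N(x)`. -/
def IsOptimal (x : EuclideanSpace ℝ (Fin n)) (u : ℕ → EuclideanSpace ℝ (Fin m))
    (xs : ℕ → EuclideanSpace ℝ (Fin n)) (s : ℝ) : Prop :=
  M.Feasible x u xs s ∧
  ∀ u' xs' s', M.Feasible x u' xs' s' → M.Cost u xs s ≤ M.Cost u' xs' s'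

/-- Assumption 1 items 2–4 on the path and steady states: `g ∘ gp = p` on `[0,1]`, each
`(gp s, us s)` is a steady state in the interior of `Z` whose footprint avoids all
obstacles, and it is the unique steady state with output `p s`. -/
def SteadyStatePath : Prop :=
  (∀ s ∈ Set.Icc (0 : ℝ) 1, M.g (M.gp s) = M.p s) ∧
  (∀ s ∈ Set.Icc (0 : ℝ) 1, M.f (M.gp s) (M.us s) = M.gp s) ∧
  (∀ s ∈ Set.Icc (0 : ℝ) 1, (M.gp s, M.us s) ∈ interior M.Z) ∧
  (∀ s ∈ Set.Icc (0 : ℝ) 1, ∀ i < M.No, M.B (M.gp s) ∩ M.O i = ∅) ∧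
  (∀ s ∈ Set.Icc (0 : ℝ) 1, ∀ xss uss, M.f xss uss = xss → M.g xss = M.p s →
      xss = M.gp s ∧ uss = M.us s)

/-- Assumption 3 (controllability): from any state `ε`-close to a steady state on the path
there is a feasible tuple whose tracking cost is bounded by `b‖x − gp s‖^σ`. -/
def Controllable (b ε σ : ℝ) : Prop :=
  ∀ s ∈ Set.Icc (0 : ℝ) 1, ∀ x : EuclideanSpace ℝ (Fin n), ‖x - M.gp s‖ ≤ ε →
    ∃ u xs, M.Feasible x u xs s ∧
      (∑ l ∈ Finset.range M.N, M.sc (xs l - M.gp s) (u l - M.us s)) ≤ b * ‖x - M.gp s‖ ^ σ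

end MPC

/-!
Feasibility forces the terminal pair to be the steady state at `ŝ = (1 - β) s + β`, so the cost
is the tracking sum plus `V_o (1 - ŝ)`. Since `s - ŝ = β (s - 1)`, Lipschitz continuity of `g_p`
gives `‖x - g_p ŝ‖ ≤ ‖x - g_p s‖ + L β |s - 1|`, and the power-mean inequality
`(a + c)^σ ≤ 2^(σ-1) (a^σ + c^σ)` splits the controllability bound. Since `1 - ŝ = (1 - β)(1 - s)`,
convexity of `V_o` with `V_o 0 = 0` gives `V_o (1 - ŝ) ≤ (1 - β) V_o (1 - s)`.
-/

namespace Real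

lemma rpow_add_le_mul_rpow_add_rpow {a b p : ℝ} (ha : 0 ≤ a) (hb : 0 ≤ b) (hp : 1 ≤ p) :
    (a + b) ^ p ≤ 2 ^ (p - 1) * (a ^ p + b ^ p) := by
  lift a to NNReal using ha
  lift b to NNReal using hb
  exact_mod_cast NNReal.rpow_add_le_mul_rpow_add_rpow a b hp

end Real

lemma ConvexOn.map_smul_le_of_map_zero {𝕜 E β : Type*} [Field 𝕜] [LinearOrder 𝕜]
    [IsStrictOrderedRing 𝕜] [AddCommGroup E] [Module 𝕜 E] [AddCommGroup β] [PartialOrder β]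
    [IsOrderedAddMonoid β] [Module 𝕜 β] {s : Set E} {f : E → β} (hf : ConvexOn 𝕜 s f)
    (h0 : (0 : E) ∈ s) (hf0 : f 0 = 0) {x : E} (hx : x ∈ s) {t : 𝕜} (ht0 : 0 ≤ t) (ht1 : t ≤ 1) :
    f (t • x) ≤ t • f x := by
  simpa [hf0] using hf.2 hx h0 ht0 (sub_nonneg.2 ht1) (add_sub_cancel t 1)

namespace MPC

variable {n m q : ℕ} {M : MPC n m q} {x : EuclideanSpace ℝ (Fin n)}
  {u : ℕ → EuclideanSpace ℝ (Fin m)} {xs : ℕ → EuclideanSpace ℝ (Fin n)} {s : ℝ}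

theorem Feasible.terminal_eq (hpath : M.SteadyStatePath) (h : M.Feasible x u xs s) :
    xs M.N = M.gp s ∧ u M.N = M.us s :=
  hpath.2.2.2.2 s h.1 (xs M.N) (u M.N) h.2.2.2.1.symm h.2.2.2.2.1

theorem Feasible.cost_eq (hpath : M.SteadyStatePath) (h : M.Feasible x u xs s) :
    M.Cost u xs s =
      (∑ l ∈ Finset.range M.N, M.sc (xs l - M.gp s) (u l - M.us s)) + M.Vo (1 - s) := by
  obtain ⟨hx, hu⟩ := h.terminal_eq hpath
  rw [Cost, hx, hu]

end MPC

theorem mpc_shifted_reference_cost_bound_general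
    {n m q : ℕ} (M : MPC n m q)
    (hpath : M.SteadyStatePath)
    (Lgp : ℝ) (hLgp : 0 < Lgp)
    (hgpLip : ∀ s ∈ Set.Icc (0 : ℝ) 1, ∀ t ∈ Set.Icc (0 : ℝ) 1,
      ‖M.gp s - M.gp t‖ ≤ Lgp * |s - t|)
    (hVoConv : ConvexOn ℝ (Set.Icc 0 1) M.Vo)
    (hVo0 : M.Vo 0 = 0)
    (b σ : ℝ) (hb : 0 < b) (hσ : 1 < σ)
    (s β : ℝ) (hs : s ∈ Set.Icc (0 : ℝ) 1) (hβ : β ∈ Set.Icc (0 : ℝ) 1)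
    (x : EuclideanSpace ℝ (Fin n))
    (u : ℕ → EuclideanSpace ℝ (Fin m)) (xt : ℕ → EuclideanSpace ℝ (Fin n))
    (hfeas : M.Feasible x u xt ((1 - β) * s + β))
    (hsum : (∑ l ∈ Finset.range M.N,
        M.sc (xt l - M.gp ((1 - β) * s + β)) (u l - M.us ((1 - β) * s + β)))
      ≤ b * ‖x - M.gp ((1 - β) * s + β)‖ ^ σ) :
    M.Cost u xt ((1 - β) * s + β) ≤
      2 ^ (σ - 1) * b * ‖x - M.gp s‖ ^ σ +
      2 ^ (σ - 1) * b * Lgp ^ σ * β ^ σ * |s - 1| ^ σ +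
      (1 - β) * M.Vo (1 - s) := by
  obtain ⟨hβ0, hβ1⟩ := hβ
  set sh := (1 - β) * s + β
  have hdist : ‖x - M.gp sh‖ ≤ ‖x - M.gp s‖ + Lgp * β * |s - 1| := calc
    ‖x - M.gp sh‖ ≤ ‖x - M.gp s‖ + ‖M.gp s - M.gp sh‖ := norm_sub_le_norm_sub_add_norm_sub _ _ _
    _ ≤ ‖x - M.gp s‖ + Lgp * |s - sh| := by gcongr; exact hgpLip s hs sh hfeas.1
    _ = ‖x - M.gp s‖ + Lgp * β * |s - 1| := by
      rw [show s - sh = β * (s - 1) by ring, abs_mul, abs_of_nonneg hβ0, mul_assoc]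
  have htracking : b * ‖x - M.gp sh‖ ^ σ ≤
      2 ^ (σ - 1) * b * ‖x - M.gp s‖ ^ σ + 2 ^ (σ - 1) * b * Lgp ^ σ * β ^ σ * |s - 1| ^ σ := calc
    b * ‖x - M.gp sh‖ ^ σ ≤ b * (‖x - M.gp s‖ + Lgp * β * |s - 1|) ^ σ := by gcongr
    _ ≤ b * (2 ^ (σ - 1) * (‖x - M.gp s‖ ^ σ + (Lgp * β * |s - 1|) ^ σ)) := by
      gcongr
      exact Real.rpow_add_le_mul_rpow_add_rpow (norm_nonneg _) (by positivity) hσ.le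
    _ = _ := by
      rw [Real.mul_rpow (by positivity) (abs_nonneg _), Real.mul_rpow hLgp.le hβ0]
      ring
  have hoffset : M.Vo (1 - sh) ≤ (1 - β) * M.Vo (1 - s) := by
    rw [show 1 - sh = (1 - β) * (1 - s) by ring]
    exact hVoConv.map_smul_le_of_map_zero (by simp) hVo0 ⟨by linarith [hs.2], by linarith [hs.1]⟩
      (by linarith) (by linarith)
  rw [hfeas.cost_eq hpath]
  linarith

/-- **Cost bound for the shifted artificial reference (eq. (13)).** Suppose `g_p` is
`L_{g_p}`-Lipschitz, `V_o` is convex with `V_o 0 = 0`, the steady-state path assumptions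
hold, and `b > 0`, `σ > 1`. Let `s, β ∈ [0,1]`, `ŝ = (1−β) s + β`, and let `x` satisfy
`‖x − gp ŝ‖ ≤ ε`. If `(u, x̃, ŝ)` is a tuple feasible at `x` provided by the
controllability assumption, i.e. `Σ_{l<N} ℓ(x̃_l − gp ŝ, u_l − u_ŝ) ≤ b ‖x − gp ŝ‖ ^ σ`,
then `J_N(u, x̃, ŝ) ≤ 2^{σ−1} b ‖x − gp s‖^σ + 2^{σ−1} b L_{g_p}^σ β^σ |s−1|^σ
+ (1−β) V_o (1−s)`. -/
theorem mpc_shifted_reference_cost_bound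
    {n m q : ℕ} (M : MPC n m q)
    (hpath : M.SteadyStatePath)
    (Lgp : ℝ) (hLgp : 0 < Lgp)
    (hgpLip : ∀ s ∈ Set.Icc (0 : ℝ) 1, ∀ t ∈ Set.Icc (0 : ℝ) 1,
      ‖M.gp s - M.gp t‖ ≤ Lgp * |s - t|)
    (hVoConv : ConvexOn ℝ (Set.Icc 0 1) M.Vo)
    (hVo0 : M.Vo 0 = 0)
    (hVoNonneg : ∀ t ∈ Set.Icc (0 : ℝ) 1, 0 ≤ M.Vo t)
    (b ε σ : ℝ) (hb : 0 < b) (hε : 0 < ε) (hσ : 1 < σ)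
    (s β : ℝ) (hs : s ∈ Set.Icc (0 : ℝ) 1) (hβ : β ∈ Set.Icc (0 : ℝ) 1)
    (x : EuclideanSpace ℝ (Fin n)) (hx : ‖x - M.gp ((1 - β) * s + β)‖ ≤ ε)
    (u : ℕ → EuclideanSpace ℝ (Fin m)) (xt : ℕ → EuclideanSpace ℝ (Fin n))
    (hfeas : M.Feasible x u xt ((1 - β) * s + β))
    (hsum : (∑ l ∈ Finset.range M.N,
        M.sc (xt l - M.gp ((1 - β) * s + β)) (u l - M.us ((1 - β) * s + β)))
      ≤ b * ‖x - M.gp ((1 - β) * s + β)‖ ^ σ) :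
    M.Cost u xt ((1 - β) * s + β) ≤
      2 ^ (σ - 1) * b * ‖x - M.gp s‖ ^ σ +
      2 ^ (σ - 1) * b * Lgp ^ σ * β ^ σ * |s - 1| ^ σ +
      (1 - β) * M.Vo (1 - s) :=
  mpc_shifted_reference_cost_bound_general M hpath Lgp hLgp hgpLip hVoConv hVo0 b σ hb hσ s β hs hβ
    x u xt hfeas hsum
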